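/- Let J be a strongly stable monomial ideal in A[x₀,…,xₙ] over a commutative noetherian ring A and F_J a J-marked set. Then for every degree s, the degree-s component of the polynomial ring decomposes as a direct sum of A-modules: A[x]_s = ⟨F_J^{(s)}⟩ ⊕ ⟨N(J)_s⟩. -/

import Mathlib

open MvPolynomial

noncomputable section

/-- Exponent vectors of monomials in the variables `x₀, …, xₙ`. -/
abbrev Mon (n : ℕ) : Type := Fin (n + 1) →₀ ℕ

namespace MarkedFamilies

variable {n : ℕ}

/-- The total degree of a monomial given by its exponent vector. -/
def mdeg (α : Mon n) : ℕ := α.sum fun _ e => e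

/-- A monomial ideal, identified with its (upward closed) set of monomials. -/
def IsMonomialIdeal (J : Set (Mon n)) : Prop := ∀ α ∈ J, ∀ δ : Mon n, α + δ ∈ J

/-- A strongly stable monomial ideal: a monomial ideal such that for every monomial
`x^α ∈ J`, every variable `x_j` dividing `x^α` and every `i > j`, `(x_i/x_j)·x^α ∈ J`. -/
def IsStronglyStable (J : Set (Mon n)) : Prop :=
  IsMonomialIdeal J ∧
    ∀ α ∈ J, ∀ j : Fin (n + 1), α j ≠ 0 → ∀ i : Fin (n + 1), j < i →
      α - Finsupp.single j 1 + Finsupp.single i 1 ∈ J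

/-- The minimal monomial generators `B_J` of a monomial ideal `J`. -/
def minGens (J : Set (Mon n)) : Set (Mon n) :=
  {α | α ∈ J ∧ ∀ j : Fin (n + 1), α j ≠ 0 → α - Finsupp.single j 1 ∉ J}

/-- `min x^γ ≥ max x^δ`: every variable dividing `x^γ` is at least every variable
dividing `x^δ` (vacuously true when either monomial is `1`). -/
def minGeMax (γ δ : Mon n) : Prop := ∀ i ∈ γ.support, ∀ j ∈ δ.support, j ≤ i

/-- Lexicographic order induced by `x₀ < ⋯ < xₙ`: `a <ₗₑₓ b` iff at the largest
index where they differ, `a` has the smaller exponent. -/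
def lexLt (a b : Mon n) : Prop :=
  ∃ i : Fin (n + 1), a i < b i ∧ ∀ j : Fin (n + 1), i < j → a j = b j

/-- A saturated strongly stable ideal: strongly stable and no minimal generator is
divisible by `x₀`. -/
def IsSaturatedSS (J : Set (Mon n)) : Prop :=
  IsStronglyStable J ∧ ∀ α ∈ minGens J, α 0 = 0

/-- The truncation `J_{≥ t}`: the (monomial) ideal generated by the monomials of `J`
of degree at least `t`. -/
def truncSet (J : Set (Mon n)) (t : ℕ) : Set (Mon n) := {α | α ∈ J ∧ t ≤ mdeg α}

section Ring

variable (A : Type*) [CommRing A]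

/-- `⟨N(J)⟩`: the `A`-span of the monomials not in `J`. -/
def nSpan (J : Set (Mon n)) : Submodule A (MvPolynomial (Fin (n + 1)) A) :=
  Submodule.span A {p | ∃ β : Mon n, β ∉ J ∧ p = monomial β (1 : A)}

/-- `⟨N(J)_s⟩`: the `A`-span of the monomials of degree `s` not in `J`. -/
def nSpanDeg (J : Set (Mon n)) (s : ℕ) : Submodule A (MvPolynomial (Fin (n + 1)) A) :=
  Submodule.span A {p | ∃ β : Mon n, β ∉ J ∧ mdeg β = s ∧ p = monomial β (1 : A)}

/-- `I_s`: the degree-`s` homogeneous component of an ideal, as an `A`-submodule. -/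
def idealDeg (I : Ideal (MvPolynomial (Fin (n + 1)) A)) (s : ℕ) :
    Submodule A (MvPolynomial (Fin (n + 1)) A) :=
  Submodule.restrictScalars A I ⊓ homogeneousSubmodule (Fin (n + 1)) A s

/-- `I_{≥ s}`: the ideal `⊕_{t ≥ s} I_t`, i.e. the ideal generated by the homogeneous
elements of `I` of degree at least `s`. -/
def idealGeq (I : Ideal (MvPolynomial (Fin (n + 1)) A)) (s : ℕ) :
    Ideal (MvPolynomial (Fin (n + 1)) A) :=
  Ideal.span {f | f ∈ I ∧ ∃ t : ℕ, s ≤ t ∧ f.IsHomogeneous t}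

/-- A homogeneous ideal of the polynomial ring. -/
def IsHomogIdeal (I : Ideal (MvPolynomial (Fin (n + 1)) A)) : Prop :=
  ∀ f ∈ I, ∀ s : ℕ, homogeneousComponent s f ∈ I

variable {A}

/-- A `J`-marked set: a family assigning to each minimal generator `x^α ∈ B_J` a
polynomial `f_α = x^α − Σ_{x^β ∈ N(J)_{|α|}} c_{αβ} x^β`. -/
def IsMarkedSet (J : Set (Mon n)) (F : Mon n → MvPolynomial (Fin (n + 1)) A) : Prop :=
  ∀ α ∈ minGens J, (F α).coeff α = 1 ∧
    ∀ β ∈ (F α).support, β ≠ α → β ∉ J ∧ mdeg β = mdeg α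

/-- The ideal generated by a marked set. -/
def markedIdeal (J : Set (Mon n)) (F : Mon n → MvPolynomial (Fin (n + 1)) A) :
    Ideal (MvPolynomial (Fin (n + 1)) A) :=
  Ideal.span (F '' minGens J)

/-- A `J`-marked basis: a `J`-marked set `F` with `A[x] = (F) ⊕ ⟨N(J)⟩` as `A`-modules. -/
def IsMarkedBasis (J : Set (Mon n)) (F : Mon n → MvPolynomial (Fin (n + 1)) A) : Prop :=
  IsMarkedSet J F ∧
    IsCompl (Submodule.restrictScalars A (markedIdeal J F)) (nSpan A J)

/-- `F_J^{(s)} = { x^δ f_α : deg(x^δ f_α) = s, min x^α ≥ max x^δ }`. -/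
def FSet (J : Set (Mon n)) (F : Mon n → MvPolynomial (Fin (n + 1)) A) (s : ℕ) :
    Set (MvPolynomial (Fin (n + 1)) A) :=
  {p | ∃ α δ : Mon n, α ∈ minGens J ∧ mdeg α + mdeg δ = s ∧ minGeMax α δ ∧
        p = monomial δ (1 : A) * F α}

/-- `F̂_J^{(s)} = { x^δ f_α : deg(x^δ f_α) = s, min x^α < max x^δ }`. -/
def FHatSet (J : Set (Mon n)) (F : Mon n → MvPolynomial (Fin (n + 1)) A) (s : ℕ) :
    Set (MvPolynomial (Fin (n + 1)) A) :=
  {p | ∃ α δ : Mon n, α ∈ minGens J ∧ mdeg α + mdeg δ = s ∧ ¬ minGeMax α δ ∧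
        p = monomial δ (1 : A) * F α}

/-- `SF_J^{(s)} = { x^δ f_β − x^γ f_α : x^δ f_β ∈ F̂_J^{(s)}, x^γ f_α ∈ F_J^{(s)},
x^δ x^β = x^γ x^α }`. -/
def SFSet (J : Set (Mon n)) (F : Mon n → MvPolynomial (Fin (n + 1)) A) (s : ℕ) :
    Set (MvPolynomial (Fin (n + 1)) A) :=
  {p | ∃ α γ β δ : Mon n, α ∈ minGens J ∧ β ∈ minGens J ∧
      mdeg β + mdeg δ = s ∧ ¬ minGeMax β δ ∧
      mdeg α + mdeg γ = s ∧ minGeMax α γ ∧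
      δ + β = γ + α ∧ p = monomial δ (1 : A) * F β - monomial γ (1 : A) * F α}

/-- A `(J_s)`-marked set: one marked polynomial `f̃_γ = x^γ − Σ_{x^δ ∈ N(J)_s} d_{γδ} x^δ`
for each monomial `x^γ` of degree `s` in `J`. -/
def IsTruncMarkedSet (J : Set (Mon n)) (s : ℕ)
    (f : Mon n → MvPolynomial (Fin (n + 1)) A) : Prop :=
  ∀ γ : Mon n, γ ∈ J → mdeg γ = s →
    (f γ).coeff γ = 1 ∧ ∀ β ∈ (f γ).support, β ≠ γ → β ∉ J ∧ mdeg β = s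

end Ring

/-- Index set for the generic coefficients `C_{αβ}` (`x^α ∈ B_J`, `x^β ∈ N(J)_{|α|}`). -/
abbrev CIdx (J : Set (Mon n)) : Type :=
  {p : Mon n × Mon n // p.1 ∈ minGens J ∧ p.2 ∉ J ∧ mdeg p.2 = mdeg p.1}

/-- The coefficient ring `ℤ[C]`. -/
abbrev ZC (J : Set (Mon n)) : Type := MvPolynomial (CIdx J) ℤ

/-- The generic `J`-marked set `𝓕_J = { x^α − Σ_{x^β ∈ N(J)_{|α|}} C_{αβ} x^β }`
in `ℤ[C][x]`, characterized through its coefficients. -/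
def IsGenericMarkedSet (J : Set (Mon n))
    (𝓕 : Mon n → MvPolynomial (Fin (n + 1)) (ZC J)) : Prop :=
  ∀ α : Mon n, ∀ hα : α ∈ minGens J,
    (𝓕 α).coeff α = 1 ∧
    (∀ γ : Mon n, ∀ hγ : γ ∉ J ∧ mdeg γ = mdeg α,
      (𝓕 α).coeff γ = - MvPolynomial.X ⟨(α, γ), hα, hγ.1, hγ.2⟩) ∧
    (∀ γ : Mon n, γ ≠ α → ¬(γ ∉ J ∧ mdeg γ = mdeg α) → (𝓕 α).coeff γ = 0)

/-- The ideal `𝔦_J ⊆ ℤ[C]` generated by the `x`-coefficients of all polynomials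
in `(𝓕_J) ∩ ⟨N(J)⟩`. -/
def markedCoeffIdeal (J : Set (Mon n))
    (𝓕 : Mon n → MvPolynomial (Fin (n + 1)) (ZC J)) : Ideal (ZC J) :=
  Ideal.span {c : ZC J | ∃ p : MvPolynomial (Fin (n + 1)) (ZC J),
    p ∈ markedIdeal J 𝓕 ∧ p ∈ nSpan (ZC J) J ∧ ∃ γ : Mon n, p.coeff γ = c}

/-- The evaluation homomorphism `φ_{F_J} : ℤ[C] → A`, `C_{αβ} ↦ c_{αβ}`, associated to a
`J`-marked set `F` with `f_α = x^α − Σ c_{αβ} x^β` (so `c_{αβ} = −(F α).coeff β`). -/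
noncomputable def evalHom (J : Set (Mon n)) {A : Type*} [CommRing A]
    (F : Mon n → MvPolynomial (Fin (n + 1)) A) : ZC J →+* A :=
  MvPolynomial.eval₂Hom (Int.castRingHom A) fun p => -((F p.val.1).coeff p.val.2)

/-- `x^γ` is the `σ`-leading monomial of `g` (with nonzero leading coefficient). -/
def IsLeadingMon {A : Type*} [CommRing A] (σlt : Mon n → Mon n → Prop)
    (g : MvPolynomial (Fin (n + 1)) A) (γ : Mon n) : Prop :=
  g.coeff γ ≠ 0 ∧ ∀ δ ∈ g.support, δ ≠ γ → σlt δ γ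

/-- `LC(I, x^γ)`: the set of leading coefficients at `x^γ` of elements of `I`,
together with `0`. -/
def LCset {A : Type*} [CommRing A] (σlt : Mon n → Mon n → Prop)
    (I : Ideal (MvPolynomial (Fin (n + 1)) A)) (γ : Mon n) : Set A :=
  {a | ∃ g ∈ I, IsLeadingMon σlt g γ ∧ g.coeff γ = a} ∪ {0}

/-- A monic ideal with respect to the term ordering `σ`. -/
def IsMonicIdeal {A : Type*} [CommRing A] (σlt : Mon n → Mon n → Prop)
    (I : Ideal (MvPolynomial (Fin (n + 1)) A)) : Prop :=
  ∀ γ : Mon n, LCset σlt I γ = {0} ∨ LCset σlt I γ = Set.univ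

/-- The set of `σ`-leading monomials of elements of `I` (i.e. `in_σ(I)`,
identified with its set of monomials). -/
def leadingMons {A : Type*} [CommRing A] (σlt : Mon n → Mon n → Prop)
    (I : Ideal (MvPolynomial (Fin (n + 1)) A)) : Set (Mon n) :=
  {γ | ∃ g ∈ I, IsLeadingMon σlt g γ}

end MarkedFamilies
end

/-!
Every monomial of a strongly stable `J` factors uniquely as `x^δ x^α` with `x^α ∈ B_J` and
`max x^δ ≤ min x^α`: existence by strong stability (peel off the smallest variable), uniqueness by
minimality of `x^α`. Order the multipliers `x^δ` colexicographically. A monomial `x^δ x^β` of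
`x^δ f_α` other than `x^δ x^α` that lies in `J` decomposes with a strictly smaller multiplier, so
the elements `x^δ f_α` of `F_J^{(s)}` are unitriangular against the monomials `x^δ x^α` of `J_s`.
Well-founded induction then writes every monomial of `J_s` through `F_J^{(s)}` modulo
`⟨N(J)_s⟩`, and a nonzero combination of `F_J^{(s)}` has a nonzero coefficient at the monomial
`x^δ x^α` of its colex-largest term, which lies in `J`, so it is not in `⟨N(J)_s⟩`.
-/

theorem Finsupp.eq_zero_of_triangular {ι κ R M : Type*} [Semiring R] [AddCommMonoid M]
    [Module R M] [LinearOrder κ] {v : ι → M} {φ : ι → M →ₗ[R] R} (key : ι → κ)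
    (hdiag : ∀ i, φ i (v i) = 1) (htri : ∀ i j, φ j (v i) ≠ 0 → i = j ∨ key j < key i)
    {c : ι →₀ R} (hc : ∀ i, φ i (linearCombination R v c) = 0) : c = 0 := by
  by_contra hne
  obtain ⟨i₀, hi₀, hmax⟩ := c.support.exists_max_image key (support_nonempty_iff.mpr hne)
  have hpivot : φ i₀ (linearCombination R v c) = c i₀ := by
    rw [linearCombination_apply, map_finsuppSum, Finsupp.sum, Finset.sum_eq_single i₀]
    · simp [hdiag]
    · intro i hi hi₀
      rw [map_smul, smul_eq_mul]
      by_contra h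
      rcases htri i i₀ (right_ne_zero_of_mul h) with rfl | hlt
      · exact hi₀ rfl
      · exact (hmax i hi).not_gt hlt
    · exact fun h => absurd hi₀ h
  exact mem_support_iff.mp hi₀ (hpivot ▸ hc i₀)

lemma MvPolynomial.monomial_mul_mem_of_forall_mem {σ R : Type*} [CommSemiring R]
    {S : Submodule R (MvPolynomial σ R)} {δ : σ →₀ ℕ} {g : MvPolynomial σ R}
    (h : ∀ β ∈ g.support, monomial (δ + β) (1 : R) ∈ S) : monomial δ (1 : R) * g ∈ S := by
  rw [g.as_sum, Finset.mul_sum]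
  refine S.sum_mem fun β hβ => ?_
  rw [monomial_mul, one_mul, ← mul_one (coeff β g), ← smul_eq_mul, ← smul_monomial]
  exact S.smul_mem _ (h β hβ)

namespace MarkedFamilies

section Monomials

variable {n : ℕ}

lemma mdeg_eq_degree (α : Mon n) : mdeg α = α.degree := rfl

lemma mdeg_add (α β : Mon n) : mdeg (α + β) = mdeg α + mdeg β :=
  map_add Finsupp.degree α β

abbrev colex (a : Mon n) : Colex (Fin (n + 1) → ℕ) := toColex a

lemma lexLt_iff_colex_lt {a b : Mon n} : lexLt a b ↔ colex a < colex b :=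
  ⟨fun ⟨i, hi, hup⟩ => ⟨i, hup, hi⟩, fun ⟨i, hup, hi⟩ => ⟨i, hi, hup⟩⟩

lemma colex_injective : Function.Injective (@colex n) :=
  toColex.injective.comp DFunLike.coe_injective

lemma lexLt_wellFounded : WellFounded (@lexLt n) :=
  Subrelation.wf lexLt_iff_colex_lt.mp (InvImage.wf colex wellFounded_lt)

lemma lexLt_trichotomy (a b : Mon n) : lexLt a b ∨ a = b ∨ lexLt b a := by
  simp only [lexLt_iff_colex_lt, ← colex_injective.eq_iff]
  exact lt_trichotomy _ _

lemma IsMonomialIdeal.mem_of_le {J : Set (Mon n)} (hJ : IsMonomialIdeal J) {a b : Mon n}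
    (ha : a ∈ J) (hab : a ≤ b) : b ∈ J := by
  simpa [add_tsub_cancel_of_le hab] using hJ a ha (b - a)

lemma eq_of_le_of_mem_minGens {J : Set (Mon n)} (hJ : IsMonomialIdeal J) {α α' : Mon n}
    (hα : α ∈ minGens J) (hα' : α' ∈ J) (hle : α' ≤ α) : α' = α := by
  by_contra hne
  obtain ⟨i, hi⟩ : ∃ i, α' i < α i := by
    by_contra! h
    exact hne (le_antisymm hle fun i => h i)
  refine hα.2 i (by omega) (hJ.mem_of_le hα' fun j => ?_)
  rcases eq_or_ne i j with rfl | hij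
  · simp only [Finsupp.coe_tsub, Pi.sub_apply, Finsupp.single_eq_same]; omega
  · simpa [Finsupp.single_apply, hij] using hle j

lemma lt_of_add_eq_of_lexLt {δ β η α' : Mon n} (h : δ + β = η + α') (hmm : minGeMax α' η)
    (hlex : lexLt δ η) : α' < β := by
  obtain ⟨i, hi, hup⟩ := hlex
  have hco (j) : δ j + β j = η j + α' j := by simpa using DFunLike.congr_fun h j
  have hle : α' ≤ β := fun j => by
    rcases lt_trichotomy j i with hj | rfl | hj
    · have : α' j = 0 := by
        by_contra hc
        exact (hmm j (Finsupp.mem_support_iff.mpr hc) i (Finsupp.mem_support_iff.mpr (by omega))).not_gt hj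
      omega
    · have := hco j; omega
    · have := hco j; have := hup j hj; omega
  exact lt_of_le_of_ne hle fun heq => by have := hco i; rw [heq] at this; omega

lemma lexLt_of_add_eq {J : Set (Mon n)} (hJ : IsMonomialIdeal J) {δ β η α' : Mon n}
    (h : δ + β = η + α') (hmm : minGeMax α' η) (hα' : α' ∈ J) (hβ : β ∉ J) :
    lexLt η δ := by
  rcases lexLt_trichotomy η δ with hlt | rfl | hgt
  · exact hlt
  · exact absurd (add_left_cancel h ▸ hα') hβ
  · exact absurd (hJ.mem_of_le hα' (lt_of_add_eq_of_lexLt h hmm hgt).le) hβ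

lemma not_lexLt_of_add_eq {J : Set (Mon n)} (hJ : IsMonomialIdeal J) {α δ α' δ' : Mon n}
    (hα : α ∈ minGens J) (hα' : α' ∈ J) (h : δ + α = δ' + α') (hm' : minGeMax α' δ') :
    ¬ lexLt δ δ' := fun hlex =>
  have hlt := lt_of_add_eq_of_lexLt h hm' hlex
  hlt.ne (eq_of_le_of_mem_minGens hJ hα hα' hlt.le)

lemma eq_of_add_eq_of_minGeMax {J : Set (Mon n)} (hJ : IsMonomialIdeal J) {α δ α' δ' : Mon n}
    (hα : α ∈ minGens J) (hα' : α' ∈ minGens J) (h : δ + α = δ' + α')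
    (hm : minGeMax α δ) (hm' : minGeMax α' δ') : α = α' ∧ δ = δ' := by
  rcases lexLt_trichotomy δ δ' with hlt | rfl | hgt
  · exact absurd hlt (not_lexLt_of_add_eq hJ hα hα'.1 h hm')
  · exact ⟨add_left_cancel h, rfl⟩
  · exact absurd hgt (not_lexLt_of_add_eq hJ hα' hα.1 h.symm hm)

lemma IsStronglyStable.sub_single_mem_of_le {J : Set (Mon n)} (hJ : IsStronglyStable J)
    {γ : Mon n} {j m : Fin (n + 1)} (hj : γ j ≠ 0) (hjJ : γ - Finsupp.single j 1 ∈ J)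
    (hm0 : γ m ≠ 0) (hmj : m ≤ j) : γ - Finsupp.single m 1 ∈ J := by
  rcases eq_or_lt_of_le hmj with rfl | hmj
  · exact hjJ
  have hmove := hJ.2 _ hjJ m (by simpa [Finsupp.single_apply, hmj.ne] using hm0) j hmj
  convert hmove using 1
  ext k
  simp only [Finsupp.coe_add, Finsupp.coe_tsub, Pi.add_apply, Pi.sub_apply, Finsupp.single_apply]
  split_ifs <;> subst_vars <;> omega

lemma IsStronglyStable.exists_decomp {J : Set (Mon n)} (hJ : IsStronglyStable J) {γ : Mon n}
    (hγ : γ ∈ J) : ∃ α δ : Mon n, α ∈ minGens J ∧ δ + α = γ ∧ minGeMax α δ := by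
  induction γ using WellFoundedLT.induction with
  | ind γ ih =>
  by_cases hmin : γ ∈ minGens J
  · exact ⟨γ, 0, hmin, zero_add γ, by simp [minGeMax]⟩
  obtain ⟨j, hj, hjJ⟩ : ∃ j, γ j ≠ 0 ∧ γ - Finsupp.single j 1 ∈ J := by
    simpa [minGens, hγ] using hmin
  have hne : γ.support.Nonempty := ⟨j, Finsupp.mem_support_iff.mpr hj⟩
  set m := γ.support.min' hne
  have hm0 : γ m ≠ 0 := Finsupp.mem_support_iff.mp (γ.support.min'_mem hne)
  have hle : Finsupp.single m 1 ≤ γ := Finsupp.single_le_iff.mpr (Nat.one_le_iff_ne_zero.mpr hm0)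
  have hlt : γ - Finsupp.single m 1 < γ := lt_of_le_of_ne tsub_le_self fun h => by
    have := DFunLike.congr_fun h m
    simp only [Finsupp.coe_tsub, Pi.sub_apply, Finsupp.single_eq_same] at this
    omega
  obtain ⟨α, δ, hα, hdec, hmm⟩ := ih _ hlt
    (hJ.sub_single_mem_of_le hj hjJ hm0 (γ.support.min'_le j (by simpa)))
  refine ⟨α, δ + Finsupp.single m 1, hα, ?_, fun i hi k hk => ?_⟩
  · rw [add_right_comm, hdec, tsub_add_cancel_of_le hle]
  rcases Finset.mem_union.mp (Finsupp.support_add hk) with hk | hk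
  · exact hmm i hi k hk
  · rw [Finsupp.support_single m one_ne_zero, Finset.mem_singleton] at hk
    subst hk
    -- `x^α` divides `x^γ`, so its variables are all at least `x_m = min x^γ`
    refine γ.support.min'_le i (Finsupp.mem_support_iff.mpr fun h => ?_)
    have := DFunLike.congr_fun hdec i
    simp only [Finsupp.coe_add, Pi.add_apply, Finsupp.coe_tsub, Pi.sub_apply,
      Finsupp.mem_support_iff] at this hi
    omega

end Monomials

section Marked

variable {n : ℕ} {A : Type*} [CommRing A] {J : Set (Mon n)}
  {F : Mon n → MvPolynomial (Fin (n + 1)) A}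

lemma IsMarkedSet.isHomogeneous (hF : IsMarkedSet J F) {α : Mon n} (hα : α ∈ minGens J) :
    (F α).IsHomogeneous (mdeg α) := by
  intro β hβ
  change Finsupp.weight (fun _ => 1) β = mdeg α
  rw [← Finsupp.degree_eq_weight_one]
  rcases eq_or_ne β α with rfl | hne
  · rfl
  · exact ((hF α hα).2 β (mem_support_iff.mpr hβ) hne).2

lemma IsMarkedSet.coeff_monomial_mul_self (hF : IsMarkedSet J F) {α : Mon n}
    (hα : α ∈ minGens J) (δ : Mon n) : (monomial δ (1 : A) * F α).coeff (δ + α) = 1 := by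
  rw [coeff_monomial_mul, one_mul, (hF α hα).1]

lemma IsMarkedSet.eq_or_lexLt_of_coeff_ne_zero (hJ : IsMonomialIdeal J) (hF : IsMarkedSet J F)
    {α δ α' δ' : Mon n} (hα : α ∈ minGens J) (hα' : α' ∈ minGens J) (hm : minGeMax α δ)
    (hm' : minGeMax α' δ') (h : (monomial δ (1 : A) * F α).coeff (δ' + α') ≠ 0) :
    (α = α' ∧ δ = δ') ∨ lexLt δ' δ := by
  rw [coeff_monomial_mul'] at h
  split_ifs at h with hle
  · have hβ : δ + (δ' + α' - δ) = δ' + α' := add_tsub_cancel_of_le hle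
    by_cases hβα : δ' + α' - δ = α
    · rw [hβα] at hβ
      exact Or.inl (eq_of_add_eq_of_minGeMax hJ hα hα' hβ hm hm')
    · have hβJ := ((hF α hα).2 _ (mem_support_iff.mpr (by simpa using h)) hβα).1
      exact Or.inr (lexLt_of_add_eq hJ hβ hm' hα'.1 hβJ)
  · exact absurd rfl h

lemma monomial_add_mem_span_FSet_sup (hJ : IsStronglyStable J) (hF : IsMarkedSet J F) {s : ℕ}
    {α δ : Mon n} (hα : α ∈ minGens J) (hm : minGeMax α δ) (hdeg : mdeg α + mdeg δ = s) :
    monomial (δ + α) (1 : A) ∈ Submodule.span A (FSet J F s) ⊔ nSpanDeg A J s := by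
  induction δ using lexLt_wellFounded.induction generalizing α with
  | _ δ ih =>
  have hFα : monomial δ (1 : A) * F α ∈ Submodule.span A (FSet J F s) ⊔ nSpanDeg A J s :=
    Submodule.mem_sup_left (Submodule.subset_span ⟨α, δ, hα, hdeg, hm, rfl⟩)
  suffices htail : monomial δ (1 : A) * (F α - monomial α 1) ∈
      Submodule.span A (FSet J F s) ⊔ nSpanDeg A J s by
    rw [mul_sub, monomial_mul, one_mul] at htail
    simpa using sub_mem hFα htail
  refine monomial_mul_mem_of_forall_mem fun β hβ => ?_
  have hβα : β ≠ α := by rintro rfl; simp [(hF β hα).1] at hβ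
  obtain ⟨hβJ, hβdeg⟩ := (hF α hα).2 β (by simpa [coeff_monomial, hβα.symm] using hβ) hβα
  have hdegβ : mdeg (δ + β) = s := by rw [mdeg_add]; omega
  by_cases hin : δ + β ∈ J
  · obtain ⟨α', η, hα', hdec, hmm⟩ := hJ.exists_decomp hin
    rw [← hdec]
    refine ih η (lexLt_of_add_eq hJ.1 hdec.symm hmm hα'.1 hβJ) hα' hmm ?_
    rw [← hdegβ, ← hdec, mdeg_add, add_comm]
  · exact Submodule.mem_sup_right (Submodule.subset_span ⟨δ + β, hin, hdegβ, rfl⟩)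

lemma span_FSet_sup_nSpanDeg_eq (hJ : IsStronglyStable J) (hF : IsMarkedSet J F) (s : ℕ) :
    Submodule.span A (FSet J F s) ⊔ nSpanDeg A J s = homogeneousSubmodule (Fin (n + 1)) A s := by
  refine le_antisymm (sup_le ?_ ?_) ?_
  · rw [Submodule.span_le]
    rintro _ ⟨α, δ, hα, hdeg, -, rfl⟩
    rw [SetLike.mem_coe, mem_homogeneousSubmodule, ← hdeg, Nat.add_comm (mdeg α)]
    exact (isHomogeneous_monomial _ rfl).mul (hF.isHomogeneous hα)
  · rw [nSpanDeg, Submodule.span_le]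
    rintro _ ⟨β, -, hβ, rfl⟩
    exact isHomogeneous_monomial _ hβ
  · rw [homogeneousSubmodule_eq_finsupp_supported, AddMonoidAlgebra.supported_eq_span_single,
      Submodule.span_le]
    rintro _ ⟨γ, hγ, rfl⟩
    change monomial γ (1 : A) ∈ _
    by_cases hin : γ ∈ J
    · obtain ⟨α, δ, hα, rfl, hm⟩ := hJ.exists_decomp hin
      refine monomial_add_mem_span_FSet_sup hJ hF hα hm ?_
      rw [← hγ.out, ← mdeg_eq_degree, mdeg_add, add_comm]
    · exact Submodule.mem_sup_right (Submodule.subset_span ⟨γ, hin, hγ, rfl⟩)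

lemma coeff_eq_zero_of_mem_nSpanDeg {s : ℕ} {p : MvPolynomial (Fin (n + 1)) A}
    (hp : p ∈ nSpanDeg A J s) {γ : Mon n} (hγ : γ ∈ J) : p.coeff γ = 0 := by
  suffices nSpanDeg A J s ≤ LinearMap.ker (lcoeff A γ) from this hp
  rw [nSpanDeg, Submodule.span_le]
  rintro _ ⟨β, hβ, -, rfl⟩
  simp [coeff_monomial, show β ≠ γ from fun h => hβ (h ▸ hγ)]

lemma span_FSet_inf_nSpanDeg_eq_bot (hJ : IsMonomialIdeal J) (hF : IsMarkedSet J F) (s : ℕ) :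
    Submodule.span A (FSet J F s) ⊓ nSpanDeg A J s = ⊥ := by
  let ι := {p : Mon n × Mon n // p.1 ∈ minGens J ∧ mdeg p.1 + mdeg p.2 = s ∧ minGeMax p.1 p.2}
  have hrange : FSet J F s = Set.range fun p : ι => monomial p.1.2 (1 : A) * F p.1.1 := by
    ext
    exact ⟨fun ⟨α, δ, hα, hdeg, hm, h⟩ => ⟨⟨(α, δ), hα, hdeg, hm⟩, h.symm⟩,
      fun ⟨p, h⟩ => ⟨p.1.1, p.1.2, p.2.1, p.2.2.1, p.2.2.2, h.symm⟩⟩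
  rw [eq_bot_iff]
  rintro _ ⟨hp, hpN⟩
  rw [SetLike.mem_coe, hrange, ← Finsupp.range_linearCombination] at hp
  obtain ⟨c, rfl⟩ := hp
  have hc : c = 0 := by
    refine Finsupp.eq_zero_of_triangular (φ := fun p : ι => lcoeff A (p.1.2 + p.1.1))
      (fun p => colex p.1.2) (fun p => hF.coeff_monomial_mul_self p.2.1 p.1.2) ?_
      fun p => coeff_eq_zero_of_mem_nSpanDeg hpN (add_comm p.1.1 p.1.2 ▸ hJ _ p.2.1.1 _)
    intro p q h
    rcases hF.eq_or_lexLt_of_coeff_ne_zero hJ p.2.1 q.2.1 p.2.2.2 q.2.2.2 h with ⟨h1, h2⟩ | h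
    · exact Or.inl (Subtype.ext (Prod.ext h1 h2))
    · exact Or.inr (lexLt_iff_colex_lt.mp h)
  simp [hc]

end Marked

end MarkedFamilies

open MvPolynomial MarkedFamilies in
theorem stmt_4_general {n : ℕ} {A : Type*} [CommRing A]
    (J : Set (Mon n)) (hJ : IsStronglyStable J)
    (F : Mon n → MvPolynomial (Fin (n + 1)) A) (hF : IsMarkedSet J F) (s : ℕ) :
    Submodule.span A (FSet J F s) ⊔ nSpanDeg A J s
        = homogeneousSubmodule (Fin (n + 1)) A s ∧
    Submodule.span A (FSet J F s) ⊓ nSpanDeg A J s = ⊥ :=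
  ⟨span_FSet_sup_nSpanDeg_eq hJ hF s, span_FSet_inf_nSpanDeg_eq_bot hJ.1 hF s⟩

open MvPolynomial MarkedFamilies in
/-- `A[x]_s = ⟨F_J^{(s)}⟩ ⊕ ⟨N(J)_s⟩` as `A`-modules. -/
theorem stmt_4 {n : ℕ} {A : Type*} [CommRing A] [IsNoetherianRing A]
    (J : Set (Mon n)) (hJ : IsStronglyStable J)
    (F : Mon n → MvPolynomial (Fin (n + 1)) A) (hF : IsMarkedSet J F) (s : ℕ) :
    Submodule.span A (FSet J F s) ⊔ nSpanDeg A J s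
        = homogeneousSubmodule (Fin (n + 1)) A s ∧
    Submodule.span A (FSet J F s) ⊓ nSpanDeg A J s = ⊥ :=
  stmt_4_general J hJ F hF s
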